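/- arXiv:math/9903027 — 8 statements merged into one kernel-verified Lean document; each statement's English description precedes it below -/
import Mathlib

section
/- If M is a modular lattice and x, y, z, t are elements of M with (x + z) · (y + t) = 0 (where + denotes supremum and · denotes infimum, and the lattice has a least element 0), then (x + y) · (z + t) = x·z + y·t. -/
/-- **Lemma 4.1.** In a modular lattice `M` with least element `0`, if
`(x ⊔ z) ⊓ (y ⊔ t) = ⊥`, then `(x ⊔ y) ⊓ (z ⊔ t) = x ⊓ z ⊔ y ⊓ t`. -/
theorem modular_disjoint_meet_of_sup {M : Type*} [Lattice M] [OrderBot M]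
    [IsModularLattice M] (x y z t : M)
    (h : (x ⊔ z) ⊓ (y ⊔ t) = ⊥) :
    (x ⊔ y) ⊓ (z ⊔ t) = x ⊓ z ⊔ y ⊓ t := by
  have hb : ∀ a b : M, a ≤ x ⊔ z → b ≤ y ⊔ t → a ⊓ b = ⊥ := fun a b ha hbb =>
    le_bot_iff.mp (h ▸ inf_le_inf ha hbb)
  -- absorption helper : c ≤ b → a ⊓ b ⊓ c = a ⊓ c
  have habs : ∀ a b c : M, c ≤ b → a ⊓ b ⊓ c = a ⊓ c := by
    intro a b c hc
    rw [inf_assoc]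
    congr 1
    exact inf_eq_right.mpr hc
  set p := (x ⊔ y) ⊓ (z ⊔ t) with hp
  set v := y ⊓ t with hv
  -- (x ⊔ z ⊔ t) ⊓ (y ⊔ t) = t
  have k1 : (x ⊔ z ⊔ t) ⊓ (y ⊔ t) = t := by
    have h2 : (t ⊔ (x ⊔ z)) ⊓ (y ⊔ t) = t ⊔ ((x ⊔ z) ⊓ (y ⊔ t)) :=
      sup_inf_assoc_of_le _ le_sup_right
    rw [h, sup_bot_eq] at h2
    calc (x ⊔ z ⊔ t) ⊓ (y ⊔ t) = (t ⊔ (x ⊔ z)) ⊓ (y ⊔ t) := by congr 1; ac_rfl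
      _ = t := h2
  -- (x ⊔ y ⊔ z) ⊓ (y ⊔ t) = y
  have k2 : (x ⊔ y ⊔ z) ⊓ (y ⊔ t) = y := by
    have h2 : (y ⊔ (x ⊔ z)) ⊓ (y ⊔ t) = y ⊔ ((x ⊔ z) ⊓ (y ⊔ t)) :=
      sup_inf_assoc_of_le _ le_sup_left
    rw [h, sup_bot_eq] at h2
    calc (x ⊔ y ⊔ z) ⊓ (y ⊔ t) = (y ⊔ (x ⊔ z)) ⊓ (y ⊔ t) := by congr 1; ac_rfl
      _ = y := h2
  -- (x ⊔ y) ⊓ t = v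
  have k3 : (x ⊔ y) ⊓ t = v := by
    have h2 : (y ⊔ x) ⊓ (y ⊔ t) = y ⊔ (x ⊓ (y ⊔ t)) :=
      sup_inf_assoc_of_le _ le_sup_left
    rw [hb x (y ⊔ t) le_sup_left le_rfl, sup_bot_eq] at h2
    have h1 : (x ⊔ y) ⊓ t = (x ⊔ y) ⊓ (y ⊔ t) ⊓ t :=
      (habs (x ⊔ y) (y ⊔ t) t le_sup_right).symm
    rw [h1, sup_comm x y, h2, hv, inf_comm]
  -- x ⊓ (z ⊔ t) = x ⊓ z
  have k4 : x ⊓ (z ⊔ t) = x ⊓ z := by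
    have h2 : (z ⊔ t) ⊓ (x ⊔ z) = z ⊔ (t ⊓ (x ⊔ z)) :=
      sup_inf_assoc_of_le _ le_sup_right
    rw [inf_comm t, hb (x ⊔ z) t le_rfl le_sup_right, sup_bot_eq] at h2
    calc x ⊓ (z ⊔ t) = x ⊓ (x ⊔ z) ⊓ (z ⊔ t) := by
          rw [inf_eq_left.mpr (le_sup_left : x ≤ x ⊔ z)]
      _ = x ⊓ ((x ⊔ z) ⊓ (z ⊔ t)) := by rw [inf_assoc]
      _ = x ⊓ z := by rw [inf_comm (x ⊔ z), h2]
  -- p ≤ x ⊔ v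
  have hxv : p ≤ x ⊔ v := by
    have hxp : x ⊔ p = (x ⊔ (z ⊔ t)) ⊓ (x ⊔ y) := by
      rw [hp, inf_comm (x ⊔ y), sup_inf_assoc_of_le _ (le_sup_left : x ≤ x ⊔ y)]
    have hstep : (x ⊔ p) ⊓ (y ⊔ t) = v := by
      have hac : x ⊔ (z ⊔ t) = x ⊔ z ⊔ t := by ac_rfl
      rw [hxp, inf_assoc, inf_comm (x ⊔ y), ← inf_assoc, hac, k1, inf_comm t, k3]
    have hsv : x ⊔ v = (x ⊔ p) ⊓ ((y ⊔ t) ⊔ x) := by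
      rw [← hstep, sup_comm, inf_sup_assoc_of_le _ (le_sup_left : x ≤ x ⊔ p)]
    rw [hsv]
    refine le_inf le_sup_right ?_
    exact (inf_le_left : p ≤ x ⊔ y).trans
      (sup_le (le_sup_of_le_right le_rfl) (le_sup_of_le_left le_sup_left))
  -- p ≤ z ⊔ v
  have hzv : p ≤ z ⊔ v := by
    have hzp : z ⊔ p = (z ⊔ (x ⊔ y)) ⊓ (z ⊔ t) := by
      rw [hp, sup_inf_assoc_of_le _ (le_sup_left : z ≤ z ⊔ t)]
    have ht : (z ⊔ t) ⊓ (y ⊔ t) = t := by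
      have h2 : (t ⊔ z) ⊓ (y ⊔ t) = t ⊔ (z ⊓ (y ⊔ t)) :=
        sup_inf_assoc_of_le _ le_sup_right
      rw [hb z (y ⊔ t) le_sup_right le_rfl, sup_bot_eq] at h2
      calc (z ⊔ t) ⊓ (y ⊔ t) = (t ⊔ z) ⊓ (y ⊔ t) := by rw [sup_comm z t]
        _ = t := h2
    have hstep : (z ⊔ p) ⊓ (y ⊔ t) = v := by
      have hac : z ⊔ (x ⊔ y) = x ⊔ y ⊔ z := by ac_rfl
      have h5 : (x ⊔ y ⊔ z) ⊓ t = v := by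
        have := habs (x ⊔ y ⊔ z) (y ⊔ t) t le_sup_right
        rw [k2] at this
        rw [← this, hv]
      rw [hzp, inf_assoc, ht, hac, h5]
    have hsv : z ⊔ v = (z ⊔ p) ⊓ ((y ⊔ t) ⊔ z) := by
      rw [← hstep, sup_comm, inf_sup_assoc_of_le _ (le_sup_left : z ≤ z ⊔ p)]
    rw [hsv]
    refine le_inf le_sup_right ?_
    exact (inf_le_right : p ≤ z ⊔ t).trans
      (sup_le le_sup_right (le_sup_of_le_left le_sup_right))
  refine le_antisymm ?_ (sup_le (le_inf (inf_le_left.trans le_sup_left)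
    (inf_le_right.trans le_sup_left)) (le_inf (inf_le_left.trans le_sup_right)
    (inf_le_right.trans le_sup_right)))
  have hfin : (v ⊔ x) ⊓ (v ⊔ z) = v ⊔ (x ⊓ (v ⊔ z)) :=
    sup_inf_assoc_of_le _ le_sup_left
  have hx : x ⊓ (v ⊔ z) ≤ x ⊓ z := by
    calc x ⊓ (v ⊔ z) ≤ x ⊓ (z ⊔ t) :=
          inf_le_inf_left _ (sup_le (hv ▸ inf_le_right.trans le_sup_right) le_sup_left)
      _ = x ⊓ z := k4
  calc p ≤ (v ⊔ x) ⊓ (v ⊔ z) := le_inf (sup_comm x v ▸ hxv) (sup_comm z v ▸ hzv)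
    _ = v ⊔ (x ⊓ (v ⊔ z)) := hfin
    _ ≤ v ⊔ (x ⊓ z) := sup_le_sup_left hx _
    _ ≤ x ⊓ z ⊔ v := by rw [sup_comm]
end

section
/- Let M be a modular lattice and x, x₁, ..., x_s elements of M. Define x̂ᵢ = x₁ + ... + x_{i-1} + x_{i+1} + ... + x_s (the join of all xⱼ with j ≠ i). Then ∑_{i=1}^{s} ((x + x̂ᵢ) · xᵢ) = (∑_{i=1}^{s} xᵢ) · ∏_{i=1}^{s} (x + x̂ᵢ). -/
open Finset

private lemma aux_modular {M : Type*} [Lattice M] [OrderBot M] [IsModularLattice M]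
    {ι : Type*} [DecidableEq ι] (xs y : ι → M) (hxy : ∀ i j, i ≠ j → xs i ≤ y j)
    (S : Finset ι) : ∀ (hS : S.Nonempty),
    S.sup xs ⊓ S.inf' hS y ≤ S.sup (fun i => y i ⊓ xs i) := by
  induction S using Finset.strongInduction with
  | _ S ih =>
    intro hS
    obtain ⟨j, hj⟩ := hS
    rcases (S.erase j).eq_empty_or_nonempty with he | hS'
    · have hSj : S = {j} := by
        have := Finset.insert_erase hj
        rw [he] at this
        simpa using this.symm
      subst hSj
      simp [inf_comm]
    · have hsub : S.erase j ⊂ S := Finset.erase_ssubset hj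
      have IH := ih _ hsub hS'
      set b := (S.erase j).sup xs with hb
      have hbyj : b ≤ y j := Finset.sup_le fun i hi =>
        hxy i j (Finset.ne_of_mem_erase hi)
      have hsupS : S.sup xs = xs j ⊔ b := by
        conv_lhs => rw [← Finset.insert_erase hj]
        rw [Finset.sup_insert]
      have hinf1 : S.inf' ⟨j, hj⟩ y ≤ y j := Finset.inf'_le _ hj
      have hinf2 : S.inf' ⟨j, hj⟩ y ≤ (S.erase j).inf' hS' y :=
        Finset.le_inf' _ _ fun i hi => Finset.inf'_le _ (Finset.mem_of_mem_erase hi)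
      have hxjle : xs j ⊓ y j ≤ (S.erase j).inf' hS' y :=
        Finset.le_inf' _ _ fun i hi =>
          le_trans inf_le_left (hxy j i (Ne.symm (Finset.ne_of_mem_erase hi)))
      calc S.sup xs ⊓ S.inf' ⟨j, hj⟩ y
          ≤ ((xs j ⊔ b) ⊓ y j) ⊓ (S.erase j).inf' hS' y := by
            rw [hsupS]
            exact le_inf (le_inf inf_le_left (le_trans inf_le_right hinf1))
              (le_trans inf_le_right hinf2)
        _ = ((xs j ⊓ y j) ⊔ b) ⊓ (S.erase j).inf' hS' y := by
            rw [sup_comm (xs j) b, sup_inf_assoc_of_le _ hbyj, sup_comm]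
        _ = (xs j ⊓ y j) ⊔ (b ⊓ (S.erase j).inf' hS' y) :=
            sup_inf_assoc_of_le _ hxjle
        _ ≤ S.sup (fun i => y i ⊓ xs i) := by
            apply sup_le
            · rw [inf_comm]; exact Finset.le_sup (f := fun i => y i ⊓ xs i) hj
            · exact le_trans IH (Finset.sup_mono (Finset.erase_subset _ _))

/-- **Lemma 4.2.** In a modular lattice `M`, for `x, x₁, …, x_s ∈ M`, with
`x̂ᵢ` the join of all `xⱼ`, `j ≠ i`, one has
`∑ᵢ ((x ⊔ x̂ᵢ) ⊓ xᵢ) = (∑ᵢ xᵢ) ⊓ ∏ᵢ (x ⊔ x̂ᵢ)`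
(sums denote joins and products denote meets). -/
theorem modular_sum_meet_hat {M : Type*} [Lattice M] [OrderBot M] [IsModularLattice M]
    {s : ℕ} (hs : s ≠ 0) (x : M) (xs : Fin s → M) :
    (univ : Finset (Fin s)).sup (fun i => (x ⊔ (univ.erase i).sup xs) ⊓ xs i)
      =
    (univ : Finset (Fin s)).sup xs ⊓
      (univ : Finset (Fin s)).inf' (univ_nonempty_iff.mpr ⟨⟨0, Nat.pos_of_ne_zero hs⟩⟩)
        (fun i => x ⊔ (univ.erase i).sup xs) := by
  set y : Fin s → M := fun i => x ⊔ (univ.erase i).sup xs with hy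
  have hxy : ∀ i j : Fin s, i ≠ j → xs i ≤ y j := fun i j hij =>
    le_trans (Finset.le_sup (Finset.mem_erase.mpr ⟨hij, Finset.mem_univ i⟩)) le_sup_right
  apply le_antisymm
  · apply Finset.sup_le
    intro i _
    apply le_inf
    · exact le_trans inf_le_right (Finset.le_sup (Finset.mem_univ i))
    · apply Finset.le_inf'
      intro j _
      rcases eq_or_ne i j with rfl | hij
      · exact inf_le_left
      · exact le_trans inf_le_right (hxy i j hij)
  · have := aux_modular xs y hxy univ (univ_nonempty_iff.mpr ⟨⟨0, Nat.pos_of_ne_zero hs⟩⟩)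
    simpa [inf_comm] using this
end

section
/- Let L be a modular lattice of finite length, L₀ a sublattice that is a Boolean algebra with the same 0 and 1 as L, and e₁,...,eₙ the atoms of L₀. For x in L, the support [x] is the minimal n-tuple (x₁,...,xₙ) with each xᵢ ≤ eᵢ and x ≤ x₁ + ... + xₙ (where tuples are ordered componentwise). Then for every x ∈ L and every index i, the i-th component of the support equals (x + êᵢ) · eᵢ, where êᵢ is the join of all eⱼ with j ≠ i. -/
open Finset

/-- `ê i`: the join of all the atoms `e j`, `j ≠ i`. -/
def hatE {L : Type*} [Lattice L] [OrderBot L] {n : ℕ} (e : Fin n → L) (i : Fin n) : L :=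
  ((univ : Finset (Fin n)).erase i).sup e

/-- **Lemma 4.3.** Let `L` be a modular lattice of finite length and `e₁, …, eₙ` the atoms of a
Boolean sublattice `L₀` sharing `⊥` and `⊤` with `L` (so `⨆ᵢ eᵢ = ⊤`, `eᵢ ⊓ êᵢ = ⊥`, `eᵢ ≠ ⊥`).
Then the tuple `i ↦ (x ⊔ êᵢ) ⊓ eᵢ` is the least tuple `(x₁, …, xₙ)` (componentwise order)
with `xᵢ ≤ eᵢ` and `x ≤ x₁ ⊔ ⋯ ⊔ xₙ`; i.e. the support of `x` is well defined and its `i`-th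
component is `[x]ᵢ = (x ⊔ êᵢ) ⊓ eᵢ`. -/
theorem support_component_eq {L : Type*} [Lattice L] [BoundedOrder L] [IsModularLattice L]
    [WellFoundedLT L] [WellFoundedGT L] {n : ℕ} (e : Fin n → L)
    (hne : ∀ i, e i ≠ ⊥)
    (hsup : (univ : Finset (Fin n)).sup e = ⊤)
    (hindep : ∀ i, e i ⊓ hatE e i = ⊥)
    (x : L) :
    IsLeast {t : Fin n → L | (∀ i, t i ≤ e i) ∧ x ≤ (univ : Finset (Fin n)).sup t}
      (fun i => (x ⊔ hatE e i) ⊓ e i) := by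
  set t : Fin n → L := fun i => (x ⊔ hatE e i) ⊓ e i with ht
  constructor
  · refine ⟨fun i => inf_le_right, ?_⟩
    -- key claim by induction on finsets
    have key : ∀ S : Finset (Fin n), x ≤ S.sup t ⊔ Sᶜ.sup e := by
      intro S
      induction S using Finset.induction with
      | empty =>
          simp [hsup]
      | @insert k S hk ih =>
          have hsub : (insert k S)ᶜ.sup e ≤ hatE e k := by
            apply Finset.sup_le
            intro j hj
            have hjk : j ≠ k := by
              intro h; subst h
              simp [Finset.mem_compl] at hj
            exact Finset.le_sup (by simp [Finset.mem_erase, hjk])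
          have hS : S.sup t ≤ hatE e k := by
            apply Finset.sup_le
            intro j hj
            have hjk : j ≠ k := fun h => hk (h ▸ hj)
            exact le_trans inf_le_right (Finset.le_sup (by simp [Finset.mem_erase, hjk]))
          set a := S.sup t ⊔ (insert k S)ᶜ.sup e with ha
          have haxe : a ≤ x ⊔ hatE e k :=
            sup_le (hS.trans le_sup_right) (hsub.trans le_sup_right)
          have hmod : a ⊔ t k = (x ⊔ hatE e k) ⊓ (a ⊔ e k) := by
            show a ⊔ (x ⊔ hatE e k) ⊓ e k = _
            rw [sup_comm a, inf_sup_assoc_of_le _ haxe, sup_comm (e k) a]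
          have haek : Sᶜ.sup e ≤ (insert k S)ᶜ.sup e ⊔ e k := by
            apply Finset.sup_le
            intro j hj
            by_cases hjk : j = k
            · subst hjk; exact le_sup_right
            · exact le_trans (Finset.le_sup (by simp [Finset.mem_compl, hjk,
                Finset.mem_compl.mp hj])) le_sup_left
          have hx : x ≤ a ⊔ e k := by
            refine le_trans ih (sup_le (le_sup_left.trans le_sup_left) ?_)
            exact haek.trans (sup_le (le_sup_right.trans le_sup_left) le_sup_right)
          have : x ≤ a ⊔ t k := by
            rw [hmod]
            exact le_inf (le_sup_left) hx
          calc x ≤ a ⊔ t k := this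
            _ ≤ (insert k S).sup t ⊔ (insert k S)ᶜ.sup e := by
                rw [ha]
                exact sup_le (sup_le (le_trans (Finset.sup_mono (Finset.subset_insert k S)) le_sup_left) le_sup_right)
                  (le_trans (Finset.le_sup (Finset.mem_insert_self k S)) le_sup_left)
    simpa [Finset.compl_univ] using key univ
  · rintro s ⟨hs1, hs2⟩
    intro i
    have hsup_s : (univ : Finset (Fin n)).sup s ≤ s i ⊔ hatE e i := by
      apply Finset.sup_le
      intro j _
      by_cases hji : j = i
      · subst hji; exact le_sup_left
      · exact le_trans (hs1 j) (le_trans (Finset.le_sup (by simp [Finset.mem_erase, hji])) le_sup_right)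
    have h1 : x ⊔ hatE e i ≤ s i ⊔ hatE e i :=
      sup_le (hs2.trans hsup_s) le_sup_right
    calc (fun i => (x ⊔ hatE e i) ⊓ e i) i ≤ (s i ⊔ hatE e i) ⊓ e i := inf_le_inf_right _ h1
      _ = s i ⊔ hatE e i ⊓ e i := sup_inf_assoc_of_le _ (hs1 i)
      _ = s i := by rw [inf_comm, hindep i, sup_bot_eq]
end

section
/- With the notation of the support in a modular lattice of finite length with distinguished Boolean sublattice L₀ with atoms e₁,...,eₙ: for all x, y ∈ L and every index i, [x + y]ᵢ = [x]ᵢ + [y]ᵢ, i.e., the support of a join is the componentwise join of the supports. -/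
open Finset

/-- The `i`-th component of the support: `[x]ᵢ = (x ⊔ êᵢ) ⊓ eᵢ`. -/
def sc {L : Type*} [Lattice L] [OrderBot L] {n : ℕ} (e : Fin n → L) (x : L) (i : Fin n) : L :=
  (x ⊔ hatE e i) ⊓ e i

/-- **Corollary to Lemma 4.3.** In a modular lattice `L` of finite length with Boolean
sublattice `L₀` (atoms `e₁, …, eₙ`, same `⊥` and `⊤` as `L`), the support of a join is the
componentwise join of the supports: `[x ⊔ y]ᵢ = [x]ᵢ ⊔ [y]ᵢ` for all `x, y ∈ L` and all `i`. -/
theorem support_sup {L : Type*} [Lattice L] [BoundedOrder L] [IsModularLattice L]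
    [WellFoundedLT L] [WellFoundedGT L] {n : ℕ} (e : Fin n → L)
    (hne : ∀ i, e i ≠ ⊥)
    (hsup : (univ : Finset (Fin n)).sup e = ⊤)
    (hindep : ∀ i, e i ⊓ hatE e i = ⊥)
    (x y : L) (i : Fin n) :
    sc e (x ⊔ y) i = sc e x i ⊔ sc e y i := by
  have htop : e i ⊔ hatE e i = ⊤ := by
    rw [← hsup]
    unfold hatE
    rw [← Finset.sup_insert, Finset.insert_erase (Finset.mem_univ i)]
  have hmem : ∀ z : L, z ⊔ hatE e i ∈ Set.Icc (hatE e i) (e i ⊔ hatE e i) := fun z =>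
    ⟨le_sup_right, htop ▸ le_top⟩
  have h := (infIccOrderIsoIccSup (e i) (hatE e i)).symm.map_sup
    ⟨x ⊔ hatE e i, hmem x⟩ ⟨y ⊔ hatE e i, hmem y⟩
  have hc2 : e i ⊓ ((x ⊔ hatE e i) ⊔ (y ⊔ hatE e i)) =
      (e i ⊓ (x ⊔ hatE e i)) ⊔ (e i ⊓ (y ⊔ hatE e i)) := congrArg Subtype.val h
  simp only [sc, inf_comm (e i) _ |>.symm]
  rw [show x ⊔ y ⊔ hatE e i = (x ⊔ hatE e i) ⊔ (y ⊔ hatE e i) from by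
    rw [sup_sup_sup_comm, sup_idem]]
  simpa [inf_comm] using hc2
end

section
/- Let L be a modular lattice of finite length with Boolean sublattice L₀ having atoms e₁,...,eₙ and the same 0 and 1 as L. Let L̄₀ denote the set of elements of the form ∑ᵢ xᵢ with each xᵢ ≤ eᵢ. Then for x, y ∈ L̄₀, x · y = ∑_{i=1}^{n} [x]ᵢ · [y]ᵢ, where [·]ᵢ denotes the i-th component of the support. -/
open Finset

/-- The set `L̄₀` of all elements of the form `x₁ ⊔ ⋯ ⊔ xₙ` with `xᵢ ≤ eᵢ`. -/
def L0bar {L : Type*} [Lattice L] [OrderBot L] {n : ℕ} (e : Fin n → L) : Set L :=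
  {x | ∃ y : Fin n → L, (∀ i, y i ≤ e i) ∧ x = (univ : Finset (Fin n)).sup y}

/-- Two-block lemma: in a modular lattice, if `a, b ≤ e₁`, `c, d ≤ e₂` and `e₁ ⊓ e₂ = ⊥`,
then `(a ⊔ c) ⊓ (b ⊔ d) = (a ⊓ b) ⊔ (c ⊓ d)`. -/
lemma twoBlock {L : Type*} [Lattice L] [OrderBot L] [IsModularLattice L]
    {e₁ e₂ a b c d : L} (ha : a ≤ e₁) (hb : b ≤ e₁) (hc : c ≤ e₂) (hd : d ≤ e₂)
    (h : e₁ ⊓ e₂ = ⊥) : (a ⊔ c) ⊓ (b ⊔ d) = (a ⊓ b) ⊔ (c ⊓ d) := by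
  have hab : a ⊓ (b ⊔ e₂) = a ⊓ b := by
    apply le_antisymm
    · refine le_inf inf_le_left ?_
      have h1 : a ⊓ (b ⊔ e₂) ≤ e₁ ⊓ (b ⊔ e₂) := inf_le_inf_right _ ha
      have h2 : e₁ ⊓ (b ⊔ e₂) = b := by
        rw [inf_comm, sup_inf_assoc_of_le _ hb, inf_comm e₂ e₁, h, sup_bot_eq]
      calc a ⊓ (b ⊔ e₂) ≤ e₁ ⊓ (b ⊔ e₂) := h1
        _ = b := h2
    · exact inf_le_inf_left _ le_sup_left
  have hcd : c ⊓ (b ⊔ d) = c ⊓ d := by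
    apply le_antisymm
    · refine le_inf inf_le_left ?_
      have h1 : c ⊓ (b ⊔ d) ≤ e₂ ⊓ (b ⊔ d) := inf_le_inf_right _ hc
      have hbe : b ⊓ e₂ = ⊥ := le_antisymm ((inf_le_inf_right _ hb).trans h.le) bot_le
      have h2 : e₂ ⊓ (b ⊔ d) = d := by
        rw [inf_comm, sup_comm b d, sup_inf_assoc_of_le _ hd, hbe, sup_bot_eq]
      calc c ⊓ (b ⊔ d) ≤ e₂ ⊓ (b ⊔ d) := h1
        _ = d := h2
    · exact inf_le_inf_left _ le_sup_right
  have step1 : (a ⊔ c) ⊓ (b ⊔ e₂) = c ⊔ (a ⊓ b) := by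
    rw [sup_comm a c, sup_inf_assoc_of_le _ (hc.trans le_sup_right), hab]
  have step2 : (a ⊔ c) ⊓ (b ⊔ d) = ((a ⊔ c) ⊓ (b ⊔ e₂)) ⊓ (b ⊔ d) := by
    rw [inf_assoc]
    congr 1
    rw [inf_eq_right.2 (sup_le_sup_left hd b)]
  rw [step2, step1, sup_comm c (a ⊓ b),
    sup_inf_assoc_of_le _ (inf_le_right.trans le_sup_left), hcd]

/-- Meets of independent-component joins distribute over components. -/
lemma sup_inf_sup {L : Type*} [Lattice L] [OrderBot L] [IsModularLattice L] {n : ℕ}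
    (e : Fin n → L) (hindep : ∀ i, e i ⊓ hatE e i = ⊥)
    (u v : Fin n → L) (hu : ∀ i, u i ≤ e i) (hv : ∀ i, v i ≤ e i) (s : Finset (Fin n)) :
    s.sup u ⊓ s.sup v = s.sup (fun i => u i ⊓ v i) := by
  induction s using Finset.induction_on with
  | empty => simp
  | @insert a s ha ih =>
    rw [Finset.sup_insert, Finset.sup_insert, Finset.sup_insert, ← ih]
    have hes : s.sup e ≤ hatE e a := by
      apply Finset.sup_le
      intro i hi
      exact Finset.le_sup (Finset.mem_erase.2 ⟨fun hia => ha (hia ▸ hi), Finset.mem_univ i⟩)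
    have hbot : e a ⊓ s.sup e = ⊥ := by
      refine le_antisymm ?_ bot_le
      exact (inf_le_inf_left _ hes).trans (hindep a).le
    exact twoBlock (hu a) (hv a) (Finset.sup_le fun i hi => (hu i).trans (Finset.le_sup hi))
      (Finset.sup_le fun i hi => (hv i).trans (Finset.le_sup hi)) hbot

/-- For `x = ⨆ xᵢ` with `xᵢ ≤ eᵢ`, the `i`-th support component is `xᵢ`. -/
lemma sc_eq {L : Type*} [Lattice L] [OrderBot L] [IsModularLattice L] {n : ℕ}
    (e : Fin n → L) (hindep : ∀ i, e i ⊓ hatE e i = ⊥)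
    (u : Fin n → L) (hu : ∀ i, u i ≤ e i) (i : Fin n) :
    sc e ((univ : Finset (Fin n)).sup u) i = u i := by
  have hsup : (univ : Finset (Fin n)).sup u ⊔ hatE e i = u i ⊔ hatE e i := by
    apply le_antisymm
    · apply sup_le _ le_sup_right
      apply Finset.sup_le
      intro j _
      by_cases hij : j = i
      · exact hij ▸ le_sup_left
      · exact le_sup_right.trans' ((hu j).trans
          (Finset.le_sup (Finset.mem_erase.2 ⟨hij, Finset.mem_univ j⟩)))
    · exact sup_le (le_sup_left.trans' (Finset.le_sup (Finset.mem_univ i))) le_sup_right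
  rw [sc, hsup, sup_inf_assoc_of_le _ (hu i), inf_comm, hindep i, sup_bot_eq]

/-- **Corollary 1 to Lemma 4.1.** In a modular lattice `L` of finite length with Boolean
sublattice `L₀` (atoms `e₁, …, eₙ`, same `⊥` and `⊤` as `L`): for `x, y ∈ L̄₀` one has
`x ⊓ y = ⨆ᵢ ([x]ᵢ ⊓ [y]ᵢ)`. -/
theorem meet_eq_sup_of_support_meets {L : Type*} [Lattice L] [BoundedOrder L]
    [IsModularLattice L] [WellFoundedLT L] [WellFoundedGT L] {n : ℕ} (e : Fin n → L)
    (hne : ∀ i, e i ≠ ⊥)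
    (hsup : (univ : Finset (Fin n)).sup e = ⊤)
    (hindep : ∀ i, e i ⊓ hatE e i = ⊥)
    (x y : L) (hx : x ∈ L0bar e) (hy : y ∈ L0bar e) :
    x ⊓ y = (univ : Finset (Fin n)).sup (fun i => sc e x i ⊓ sc e y i) := by
  obtain ⟨u, hu, rfl⟩ := hx
  obtain ⟨v, hv, rfl⟩ := hy
  have hx' : ∀ i, sc e ((univ : Finset (Fin n)).sup u) i = u i := sc_eq e hindep u hu
  have hy' : ∀ i, sc e ((univ : Finset (Fin n)).sup v) i = v i := sc_eq e hindep v hv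
  simp only [hx', hy']
  exact sup_inf_sup e hindep u v hu hv univ
end

section
/- Let L be a modular lattice of finite length with dimension (rank) function d, and L₀ a Boolean sublattice with atoms e₁,...,eₙ sharing 0 and 1 with L. For v ∈ L and a subset I ⊆ {1,...,n}, there exists v_I ∈ L with [v_I]ᵢ = 0 for all i ∈ I and v + ∑_{i∈I}[v]ᵢ = v_I + ∑_{i∈I}[v]ᵢ. (One may take v_I = (v + ∑_{i∈I}[v]ᵢ) · (∑_{i∉I}[v]ᵢ).) -/
open Finset

private lemma key_le {L : Type*} [Lattice L] [BoundedOrder L] [IsModularLattice L]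
    {n : ℕ} (e : Fin n → L)
    (hsup : (univ : Finset (Fin n)).sup e = ⊤)
    (hindep : ∀ i, e i ⊓ hatE e i = ⊥)
    (v : L) (I : Finset (Fin n)) :
    v ≤ I.sup (sc e v) ⊔ (univ \ I).sup e := by
  classical
  induction I using Finset.induction_on with
  | empty =>
      simp [hsup]
  | @insert k I hk ih =>
      set a := I.sup (sc e v) with ha
      set b := ((univ : Finset (Fin n)) \ insert k I).sup e with hb
      have hek : e k ⊔ hatE e k = ⊤ := by
        rw [hatE, ← Finset.sup_insert, Finset.insert_erase (Finset.mem_univ k), hsup]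
      have hma : a ≤ hatE e k := by
        apply Finset.sup_le
        intro j hj
        refine le_trans inf_le_right (Finset.le_sup ?_)
        simp only [hatE, Finset.mem_erase, Finset.mem_univ, and_true]
        rintro rfl; exact hk hj
      have hmb : b ≤ hatE e k := by
        apply Finset.sup_le
        intro j hj
        apply Finset.le_sup
        simp only [Finset.mem_sdiff, Finset.mem_univ, true_and, Finset.mem_insert,
          not_or] at hj
        simp only [hatE, Finset.mem_erase, Finset.mem_univ, and_true]
        exact hj.1
      have hm : a ⊔ b ≤ hatE e k := sup_le hma hmb
      have h1 : v ≤ (a ⊔ b) ⊔ e k := by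
        refine le_trans ih (sup_le (le_sup_left.trans le_sup_left) ?_)
        apply Finset.sup_le
        intro j hj
        simp only [Finset.mem_sdiff, Finset.mem_univ, true_and] at hj
        by_cases hjk : j = k
        · subst hjk; exact le_sup_right
        · refine le_trans (Finset.le_sup (b := j) ?_) (le_trans le_sup_right le_sup_left)
          simp [hj, hjk]
      have h2 : v ≤ sc e v k ⊔ hatE e k := by
        have : sc e v k ⊔ hatE e k = (v ⊔ hatE e k) ⊓ (e k ⊔ hatE e k) := by
          rw [sc, inf_sup_assoc_of_le _ le_sup_right]
        rw [this, hek, inf_top_eq]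
        exact le_sup_left
      have hXk : (sc e v k ⊔ hatE e k) ⊓ e k = sc e v k := by
        simp only [sc]
        rw [sup_inf_assoc_of_le _ inf_le_right, inf_comm (hatE e k),
          hindep k, sup_bot_eq]
      have h3 : (sc e v k ⊔ hatE e k) ⊓ ((a ⊔ b) ⊔ e k) = sc e v k ⊔ (a ⊔ b) := by
        rw [sup_comm (a ⊔ b) (e k), ← inf_sup_assoc_of_le _ (le_trans hm le_sup_right),
          hXk]
      have h4 : v ≤ sc e v k ⊔ (a ⊔ b) := h3 ▸ le_inf h2 h1
      calc v ≤ sc e v k ⊔ (a ⊔ b) := h4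
        _ = (sc e v k ⊔ a) ⊔ b := by rw [sup_assoc]
        _ = (insert k I).sup (sc e v) ⊔ b := by rw [Finset.sup_insert]

/-- **Lemma 4.4.** Let `L` be a modular lattice of finite length with Boolean sublattice `L₀`
(atoms `e₁, …, eₙ`, same `⊥` and `⊤` as `L`). For `v ∈ L` and `I ⊆ {1, …, n}` there exists
`v_I ∈ L` with `[v_I]ᵢ = ⊥` for all `i ∈ I` and
`v ⊔ ⨆_{i ∈ I} [v]ᵢ = v_I ⊔ ⨆_{i ∈ I} [v]ᵢ`. -/
theorem exists_support_truncation {L : Type*} [Lattice L] [BoundedOrder L]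
    [IsModularLattice L] [WellFoundedLT L] [WellFoundedGT L] {n : ℕ} (e : Fin n → L)
    (hne : ∀ i, e i ≠ ⊥)
    (hsup : (univ : Finset (Fin n)).sup e = ⊤)
    (hindep : ∀ i, e i ⊓ hatE e i = ⊥)
    (v : L) (I : Finset (Fin n)) :
    ∃ vI : L, (∀ i ∈ I, sc e vI i = ⊥) ∧
      v ⊔ I.sup (sc e v) = vI ⊔ I.sup (sc e v) := by
  classical
  set s := I.sup (sc e v) with hs
  set c := (univ \ I).sup e with hc
  set w := v ⊔ s with hw
  refine ⟨w ⊓ c, ?_, ?_⟩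
  · intro i hi
    have hcle : c ≤ hatE e i := by
      apply Finset.sup_le
      intro j hj
      apply Finset.le_sup
      simp only [Finset.mem_sdiff, Finset.mem_univ, true_and] at hj
      simp only [hatE, Finset.mem_erase, Finset.mem_univ, and_true]
      rintro rfl; exact hj hi
    have h1 : w ⊓ c ⊔ hatE e i = hatE e i :=
      sup_eq_right.2 (le_trans inf_le_right hcle)
    simp [sc, h1, inf_comm, hindep i]
  · have hsw : s ≤ w := le_sup_right
    have h2 : w ⊓ c ⊔ s = w ⊓ (c ⊔ s) := inf_sup_assoc_of_le _ hsw
    have h3 : w ≤ c ⊔ s := by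
      have := key_le e hsup hindep v I
      calc w = v ⊔ s := rfl
        _ ≤ (s ⊔ c) ⊔ s := sup_le_sup_right this s
        _ ≤ c ⊔ s := by rw [sup_comm s c, sup_assoc]; simp
    rw [h2, inf_eq_left.2 h3]
end

section
/- Let L be a modular lattice of finite length with Boolean sublattice L₀ (atoms e₁,...,eₙ, same 0 and 1 as L), and support [·] as above. If, for indices i ≠ j and x ≤ e_j, t is an automorphism of L in the set H_{ij}(x) (i.e., t fixes all elements below e_s for s ≠ i, satisfies [t(x_i)]_i = x_i for all x_i ≤ e_i, and [t(e_i)] has k-th component 0 for k ∉ {i,j}, e_i for k = i, and x for k = j), then t(e_i) + e_i = e_i + x and t(e_i) + x = e_i + x. -/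
open Finset

/-- The set `H_{ij}(x)` of transvections: automorphisms `t` of `L` such that
(1) `t y = y` for every `s ≠ i` and `y ≤ e s`;
(2) `[t y]ᵢ = y` for every `y ≤ eᵢ`;
(3) `[t eᵢ]ₖ = ⊥` for `k ∉ {i,j}`, `[t eᵢ]ᵢ = eᵢ` and `[t eᵢ]ⱼ = x`. -/
def Hij {L : Type*} [Lattice L] [OrderBot L] {n : ℕ} (e : Fin n → L) (i j : Fin n) (x : L) :
    Set (L ≃o L) :=
  {t | (∀ s, s ≠ i → ∀ y, y ≤ e s → t y = y) ∧
       (∀ y, y ≤ e i → sc e (t y) i = y) ∧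
       (∀ k, k ≠ i → k ≠ j → sc e (t (e i)) k = ⊥) ∧
       sc e (t (e i)) i = e i ∧ sc e (t (e i)) j = x}


section Aux

variable {L : Type*} [Lattice L] [BoundedOrder L] [IsModularLattice L] {n : ℕ}

lemma hatE_sup_self (e : Fin n → L)
    (hsup : (univ : Finset (Fin n)).sup e = ⊤) (k : Fin n) : e k ⊔ hatE e k = ⊤ := by
  rw [hatE, ← Finset.sup_insert, Finset.insert_erase (Finset.mem_univ k), hsup]

lemma le_hatE (e : Fin n → L) {k m : Fin n} (h : m ≠ k) : e m ≤ hatE e k :=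
  Finset.le_sup (Finset.mem_erase.2 ⟨h, Finset.mem_univ m⟩)

lemma le_sup_compl (e : Fin n → L)
    (hsup : (univ : Finset (Fin n)).sup e = ⊤)
    (hindep : ∀ i, e i ⊓ hatE e i = ⊥) (w : L) :
    ∀ T : Finset (Fin n), (∀ k ∈ T, w ≤ hatE e k) → w ≤ ((univ : Finset (Fin n)) \ T).sup e := by
  intro T
  induction T using Finset.induction with
  | empty => intro _; simpa [hsup] using le_top (a := w)
  | @insert m T hm ih =>
    intro h
    have h1 : w ≤ hatE e m := h m (Finset.mem_insert_self m T)
    have h2 : w ≤ ((univ : Finset (Fin n)) \ T).sup e :=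
      ih fun k hk => h k (Finset.mem_insert_of_mem hk)
    have hmem : m ∈ (univ : Finset (Fin n)) \ T := by simp [hm]
    set R := (((univ : Finset (Fin n)) \ T).erase m).sup e with hR
    have hsplit : ((univ : Finset (Fin n)) \ T).sup e = e m ⊔ R := by
      rw [hR, ← Finset.sup_insert, Finset.insert_erase hmem]
    have hRle : R ≤ hatE e m :=
      Finset.sup_le fun k hk => le_hatE e (Finset.mem_erase.1 hk).1
    have key : (e m ⊔ R) ⊓ hatE e m = R := by
      rw [sup_comm, sup_inf_assoc_of_le (e m) hRle, hindep m, sup_bot_eq]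
    have hwR : w ≤ R := by
      rw [← key]
      exact le_inf (hsplit ▸ h2) h1
    have hset : ((univ : Finset (Fin n)) \ insert m T) = ((univ : Finset (Fin n)) \ T).erase m := by
      ext k; simp [Finset.mem_erase, and_comm, eq_comm, not_or]
    rw [hset]
    exact hwR

end Aux

/-- **Corollary 1 to Lemma 4.4.** In a modular lattice `L` of finite length with Boolean
sublattice `L₀` (atoms `e₁, …, eₙ`, same `⊥` and `⊤`): if `i ≠ j`, `x ≤ eⱼ` and
`t ∈ H_{ij}(x)`, then `(a) t eᵢ ⊔ eᵢ = eᵢ ⊔ x` and `(b) t eᵢ ⊔ x = eᵢ ⊔ x`. -/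
theorem transvection_sup_eq {L : Type*} [Lattice L] [BoundedOrder L] [IsModularLattice L]
    [WellFoundedLT L] [WellFoundedGT L] {n : ℕ} (e : Fin n → L)
    (hne : ∀ i, e i ≠ ⊥)
    (hsup : (univ : Finset (Fin n)).sup e = ⊤)
    (hindep : ∀ i, e i ⊓ hatE e i = ⊥)
    (i j : Fin n) (hij : i ≠ j) (x : L) (hx : x ≤ e j)
    (t : L ≃o L) (ht : t ∈ Hij e i j x) :
    t (e i) ⊔ e i = e i ⊔ x ∧ t (e i) ⊔ x = e i ⊔ x := by
  obtain ⟨h1, h2, h3, h4, h5⟩ := ht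
  set u := t (e i) with hu
  have hvanish : ∀ k, k ≠ i → k ≠ j → u ≤ hatE e k := by
    intro k hki hkj
    have hb : (u ⊔ hatE e k) ⊓ e k = ⊥ := h3 k hki hkj
    have heq : u ⊔ hatE e k = hatE e k := by
      have hmod : hatE e k ⊔ e k ⊓ (u ⊔ hatE e k) = (hatE e k ⊔ e k) ⊓ (u ⊔ hatE e k) :=
        (sup_inf_assoc_of_le (e k) (le_sup_right : hatE e k ≤ u ⊔ hatE e k)).symm
      rw [inf_comm] at hb
      rw [hb, sup_bot_eq, sup_comm (hatE e k) (e k), hatE_sup_self e hsup k, top_inf_eq] at hmod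
      exact hmod.symm
    calc u ≤ u ⊔ hatE e k := le_sup_left
    _ = hatE e k := heq
  have huij : u ≤ e i ⊔ e j := by
    have hle := le_sup_compl e hsup hindep u ((univ : Finset (Fin n)) \ {i, j})
      (fun k hk => by
        rcases Finset.mem_sdiff.1 hk with ⟨-, hk2⟩
        simp only [Finset.mem_insert, Finset.mem_singleton, not_or] at hk2
        exact hvanish k hk2.1 hk2.2)
    have hs : (univ : Finset (Fin n)) \ ((univ : Finset (Fin n)) \ {i, j}) = {i, j} := by
      simp
    rw [hs] at hle
    simpa using hle
  have hxhi : x ≤ hatE e i := le_trans hx (le_hatE e (Ne.symm hij))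
  have heihj : e i ≤ hatE e j := le_hatE e hij
  have hkey : hatE e j ⊓ (e i ⊔ e j) = e i := by
    rw [inf_comm, sup_inf_assoc_of_le (e j) heihj, hindep j, sup_bot_eq]
  have hv : (u ⊔ hatE e j) ⊓ (e i ⊔ e j) = u ⊔ e i := by
    rw [sup_inf_assoc_of_le (hatE e j) huij, hkey]
  have hxv : x = (u ⊔ e i) ⊓ e j := by
    rw [← hv, inf_assoc]
    have hej : (e i ⊔ e j) ⊓ e j = e j := by simp
    rw [hej]
    exact h5.symm
  have ha : u ⊔ e i = e i ⊔ x := by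
    have hmod : e i ⊔ e j ⊓ (u ⊔ e i) = (e i ⊔ e j) ⊓ (u ⊔ e i) :=
      (sup_inf_assoc_of_le (e j) (le_sup_right : e i ≤ u ⊔ e i)).symm
    rw [inf_comm (e i ⊔ e j) (u ⊔ e i), inf_eq_left.2 (sup_le huij le_sup_left)] at hmod
    rw [← hmod, inf_comm, ← hxv]
  refine ⟨ha, ?_⟩
  have huex : u ≤ e i ⊔ x := ha ▸ le_sup_left
  have hei : e i ≤ u ⊔ hatE e i := inf_eq_right.1 h4
  have hkey2 : hatE e i ⊓ (e i ⊔ x) = x := by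
    rw [inf_comm, sup_comm (e i) x, sup_inf_assoc_of_le (e i) hxhi, hindep i, sup_bot_eq]
  have hux : (u ⊔ hatE e i) ⊓ (e i ⊔ x) = u ⊔ x := by
    rw [sup_inf_assoc_of_le (hatE e i) huex, hkey2]
  have heiux : e i ≤ u ⊔ x := by
    rw [← hux]; exact le_inf hei le_sup_left
  exact le_antisymm (sup_le huex le_sup_right) (sup_le heiux le_sup_right)
end

section
/- With the setting of transvections H_{ij}(x) as above: if t ∈ H_{ij}(x), then t⁻¹ ∈ H_{ij}(x). -/
open Finset

/-- **Corollary 2 to Lemma 4.4.** In a modular lattice `L` of finite length with Boolean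
sublattice `L₀` (atoms `e₁, …, eₙ`, same `⊥` and `⊤`): if `i ≠ j`, `x ≤ eⱼ` and
`t ∈ H_{ij}(x)`, then also `t⁻¹ ∈ H_{ij}(x)`. -/
theorem transvection_inv_mem {L : Type*} [Lattice L] [BoundedOrder L] [IsModularLattice L]
    [WellFoundedLT L] [WellFoundedGT L] {n : ℕ} (e : Fin n → L)
    (hne : ∀ i, e i ≠ ⊥)
    (hsup : (univ : Finset (Fin n)).sup e = ⊤)
    (hindep : ∀ i, e i ⊓ hatE e i = ⊥)
    (i j : Fin n) (hij : i ≠ j) (x : L) (hx : x ≤ e j)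
    (t : L ≃o L) (ht : t ∈ Hij e i j x) :
    t.symm ∈ Hij e i j x := by
  classical
  obtain ⟨h1, h2, h3, h4, h5⟩ := ht
  -- t fixes each e s for s ≠ i
  have hfix : ∀ s, s ≠ i → t (e s) = e s := fun s hs => h1 s hs _ le_rfl
  -- t commutes with finite sups
  have tsup : ∀ (s : Finset (Fin n)) (f : Fin n → L),
      t (s.sup f) = s.sup (fun a => t (f a)) := by
    intro s f
    exact Finset.comp_sup_eq_sup_comp (t : L → L) (fun a b => map_sup t a b) (map_bot t)
  -- e i ⊔ ê i = ⊤
  have htop : e i ⊔ hatE e i = ⊤ := by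
    rw [hatE, ← hsup]
    conv_rhs => rw [← Finset.insert_erase (Finset.mem_univ i)]
    rw [Finset.sup_insert]
  -- t fixes ê i
  have hEi : t (hatE e i) = hatE e i := by
    rw [hatE, tsup]
    exact Finset.sup_congr rfl fun s hs => hfix s (Finset.ne_of_mem_erase hs)
  -- key: t y ⊔ ê i = y ⊔ ê i for y ≤ e i
  have hA : ∀ y, y ≤ e i → t y ⊔ hatE e i = y ⊔ hatE e i := by
    intro y hy
    have h' : (t y ⊔ hatE e i) ⊓ e i ⊔ hatE e i = t y ⊔ hatE e i := by
      rw [inf_sup_assoc_of_le _ (le_sup_right : hatE e i ≤ t y ⊔ hatE e i), htop, inf_top_eq]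
    calc t y ⊔ hatE e i = (t y ⊔ hatE e i) ⊓ e i ⊔ hatE e i := h'.symm
      _ = y ⊔ hatE e i := by
          have := h2 y hy
          rw [sc] at this
          rw [this]
  have hA' : ∀ y, y ≤ e i → t.symm y ⊔ hatE e i = y ⊔ hatE e i := by
    intro y hy
    apply t.injective
    rw [map_sup, map_sup, hEi, t.apply_symm_apply]
    exact (hA y hy).symm
  -- condition (2) for t.symm
  have h2' : ∀ y, y ≤ e i → sc e (t.symm y) i = y := by
    intro y hy
    rw [sc, hA' y hy, sup_inf_assoc_of_le _ hy, inf_comm, hindep i, sup_bot_eq]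
  -- for k ≠ i : t applied to (t.symm (e i) ⊔ ê k) ⊓ e k equals sc e (t (e i)) k
  have hkey : ∀ k, k ≠ i → t ((t.symm (e i) ⊔ hatE e k) ⊓ e k) = sc e (t (e i)) k := by
    intro k hk
    have hiS : i ∈ (univ : Finset (Fin n)).erase k := Finset.mem_erase.2 ⟨hk.symm, Finset.mem_univ i⟩
    set S : Finset (Fin n) := ((univ : Finset (Fin n)).erase k).erase i with hS
    have hsplit : hatE e k = e i ⊔ S.sup e := by
      rw [hatE]
      conv_lhs => rw [← Finset.insert_erase hiS]
      rw [Finset.sup_insert]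
    have htE : t (hatE e k) = t (e i) ⊔ S.sup e := by
      rw [hatE, tsup]
      conv_lhs => rw [← Finset.insert_erase hiS]
      rw [Finset.sup_insert]
      congr 1
      exact Finset.sup_congr rfl fun s hs => hfix s (Finset.ne_of_mem_erase hs)
    rw [map_inf, map_sup, t.apply_symm_apply, hfix k hk, htE, sc, hsplit]
    rw [← sup_assoc, ← sup_assoc, sup_comm (e i) (t (e i))]
  refine ⟨?_, ?_, ?_, ?_, ?_⟩
  · intro s hs y hy
    have := h1 s hs y hy
    conv_lhs => rw [← this]
    exact t.symm_apply_apply _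
  · exact h2'
  · intro k hki hkj
    have := hkey k hki
    rw [h3 k hki hkj] at this
    have : (t.symm (e i) ⊔ hatE e k) ⊓ e k = t.symm ⊥ := by
      rw [← this, t.symm_apply_apply]
    rw [sc, this, map_bot]
  · exact h2' (e i) le_rfl
  · have hj : j ≠ i := hij.symm
    have := hkey j hj
    rw [h5] at this
    have heq : (t.symm (e i) ⊔ hatE e j) ⊓ e j = t.symm x := by
      rw [← this, t.symm_apply_apply]
    rw [sc, heq]
    exact t.injective (by rw [t.apply_symm_apply]; exact (h1 j hj x hx).symm)
end
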